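/- Let S be a nonempty subset of [0,M]^Ω, let f ∈ [0,M]^Ω, and for u : Ω → ℝ define E(u) = (1/|Ω|)·Σ_{k∈Ω}((Au)[k] − (Af)[k])² and, for z = (k₁,…,k_m) ∈ Ω^m, E_z(u) = (1/m)·Σ_{i=1}^m ((Au)[k_i] − (Af)[k_i])². Then for every ε > 0 and every γ with 0 < γ ≤ 1, P{ z ∈ Ω^m : sup_{u∈S} (E(u) − E_z(u))/√(E(u) + ε) > 4γ√ε } ≤ N(S, γε/(2‖A‖²_∞M)) · exp(−3γ²mε/(8‖A‖²_∞M²)). -/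

import Mathlib

noncomputable section

open scoped BigOperators

namespace WFrame

/-- convolution of finitely supported sequences on an additive group -/
def fconv {G : Type*} [AddZeroClass G] (f g : G →₀ ℝ) : G →₀ ℝ :=
  f.sum fun a c => g.sum fun b d => Finsupp.single (a + b) (c * d)

/-- convolution power; `fpow f 0` is the Dirac delta at 0 -/
def fpow {G : Type*} [AddZeroClass G] (f : G →₀ ℝ) : ℕ → (G →₀ ℝ)
  | 0 => Finsupp.single 0 1
  | n + 1 => fconv (fpow f n) f

/-- the 1st order average filter p = δ₀ + δ₁ -/
def pF : ℤ →₀ ℝ := Finsupp.single 0 1 + Finsupp.single 1 1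

/-- the 1st order difference filter q = δ₀ − δ₁ -/
def qF : ℤ →₀ ℝ := Finsupp.single 0 1 - Finsupp.single 1 1

/-- j_r = 1 if r odd, 0 if r even -/
def jr (r : ℕ) : ℤ := if r % 2 = 1 then 1 else 0

/-- univariate B-spline UEP filter `a_α`; `aF r α k = aα[k]`.
`Finsupp.mapDomain (· + jr r)` shifts the sequence so that its value at `k` is the
value of the original sequence at `k - jr r`. -/
def aF (r α : ℕ) : ℤ →₀ ℝ :=
  if α = 0 then ((2:ℝ) ^ (-(r:ℤ))) • Finsupp.mapDomain (· + jr r) (fpow pF r)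
  else ((-1:ℝ) ^ (α + 1) * (2:ℝ) ^ (-(r:ℤ)) * Real.sqrt (r.choose α)) •
    Finsupp.mapDomain (· + jr r) (fconv (fpow pF (r - α)) (fpow qF α))

/-- tensor product of two finitely supported sequences -/
def tens2 (f g : ℤ →₀ ℝ) : (ℤ × ℤ) →₀ ℝ :=
  Finsupp.onFinset (f.support ×ˢ g.support) (fun k => f k.1 * g k.2) (fun k hk => by
    simp only [Finset.mem_product, Finsupp.mem_support_iff]
    exact ⟨left_ne_zero_of_mul hk, right_ne_zero_of_mul hk⟩)

/-- tensor product filter `a_{(α₁,α₂)}[(k₁,k₂)] = a_{α₁}[k₁]·a_{α₂}[k₂]` -/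
def a2 (r : ℕ) (α : ℕ × ℕ) : (ℤ × ℤ) →₀ ℝ := tens2 (aF r α.1) (aF r α.2)

/-- the band set B = {0,…,r}² \ {(0,0)} -/
def Band (r : ℕ) : Finset (ℕ × ℕ) :=
  (Finset.range (r + 1) ×ˢ Finset.range (r + 1)).erase (0, 0)

/-- upsampling: `upSample l a` equals `a[k/2^l]` on `2^l ℤ²` and `0` elsewhere -/
def upSample (l : ℕ) (a : (ℤ × ℤ) →₀ ℝ) : (ℤ × ℤ) →₀ ℝ :=
  Finsupp.mapDomain (fun k => ((2 ^ l : ℤ) * k.1, (2 ^ l : ℤ) * k.2)) a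

/-- `lowChain r l = ã_{l−1,(0,0)} ∗ ⋯ ∗ ã_{0,(0,0)}` (Dirac delta for `l = 0`) -/
def lowChain (r : ℕ) : ℕ → ((ℤ × ℤ) →₀ ℝ)
  | 0 => Finsupp.single 0 1
  | l + 1 => fconv (upSample l (a2 r (0, 0))) (lowChain r l)

/-- multi-level filter `a_{l,α} = ã_{l,α} ∗ ã_{l−1,(0,0)} ∗ ⋯ ∗ ã_{0,(0,0)}` -/
def aLvl (r l : ℕ) (α : ℕ × ℕ) : (ℤ × ℤ) →₀ ℝ :=
  fconv (upSample l (a2 r α)) (lowChain r l)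

/-- periodization `P_N(a)` of a finitely supported sequence on ℤ², as a function on
(ℤ/Nℤ)²: `per N a k = Σ_{m ≡ k (mod N)} a[m]`. -/
def per (N : ℕ) (a : (ℤ × ℤ) →₀ ℝ) (k : ZMod N × ZMod N) : ℝ :=
  ∑ m ∈ a.support, if ((m.1 : ZMod N), (m.2 : ZMod N)) = k then a m else 0

/-- periodic convolution `(a ⊛ u)[k] = Σ_{n∈Ω} P_N(a)[k−n]·u[n]` -/
def pconv (N : ℕ) [NeZero N] (a : (ℤ × ℤ) →₀ ℝ) (u : ZMod N × ZMod N → ℝ)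
    (k : ZMod N × ZMod N) : ℝ :=
  ∑ n : ZMod N × ZMod N, per N a (k - n) * u n

/-- reflection `a[−·]` -/
def refl2 (a : (ℤ × ℤ) →₀ ℝ) : (ℤ × ℤ) →₀ ℝ := Finsupp.mapDomain (fun k => -k) a

/-- wavelet frame coefficients `W_{l,α}u = a_{l,α}[−·] ⊛ u` -/
def Wc (r N : ℕ) [NeZero N] (l : ℕ) (α : ℕ × ℕ) (u : ZMod N × ZMod N → ℝ) :
    ZMod N × ZMod N → ℝ :=
  pconv N (refl2 (aLvl r l α)) u

/-- `‖Wu‖₁` -/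
def wnorm1 (r N L : ℕ) [NeZero N] (u : ZMod N × ZMod N → ℝ) : ℝ :=
  ∑ k : ZMod N × ZMod N, ∑ l ∈ Finset.range L, ∑ α ∈ Band r, |Wc r N l α u k|

/-- weighted norm `‖λ·Wu‖₁` -/
def wnormW (r N L : ℕ) [NeZero N] (lam : ℕ → ℕ × ℕ → ZMod N × ZMod N → ℝ)
    (u : ZMod N × ZMod N → ℝ) : ℝ :=
  ∑ k : ZMod N × ZMod N, ∑ l ∈ Finset.range L, ∑ α ∈ Band r,
    lam l α k * |Wc r N l α u k|

/-- discrete total variation (no wrap-around) on the grid {0,…,N−1}² -/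
def tv (N : ℕ) [NeZero N] (u : ZMod N × ZMod N → ℝ) : ℝ :=
  (∑ i ∈ Finset.range (N - 1), ∑ j ∈ Finset.range N,
      |u ((i : ZMod N) + 1, (j : ZMod N)) - u ((i : ZMod N), (j : ZMod N))|) +
  (∑ i ∈ Finset.range N, ∑ j ∈ Finset.range (N - 1),
      |u ((i : ZMod N), (j : ZMod N) + 1) - u ((i : ZMod N), (j : ZMod N))|)

/-- covering number of `S` by closed ℓ∞-balls of radius `t` with centers in `[0,Mb]^Ω` -/
def coverNum {X : Type*} (Mb t : ℝ) (S : Set (X → ℝ)) : ℕ :=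
  sInf {K : ℕ | ∃ v : Fin K → X → ℝ, (∀ j x, v j x ∈ Set.Icc 0 Mb) ∧
    ∀ u ∈ S, ∃ j, ∀ x, |u x - v j x| ≤ t}

open scoped Classical in
/-- probability of an event under i.i.d. uniform sampling of `m` points from a finite set -/
def prob {X : Type*} [Fintype X] {m : ℕ} (E : Set (Fin m → X)) : ℝ :=
  (∑ z : Fin m → X, if z ∈ E then (1:ℝ) else 0) / (Fintype.card X : ℝ) ^ m

end WFrame

/-!
Cover `S` by `coverNum` ℓ∞-balls of radius `γε/(2‖A‖²M)` centred in `[0,M]^Ω`. The squared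
residual `(Au - Af)²` is pointwise `2‖A‖²M`-Lipschitz in `u`, so replacing `u` by its centre `v`
changes both `E(u)` and `E_z(u)` by at most `γε`, and a normalized deviation above `4γ√ε` at `u`
becomes `E(v) - E_z(v) > γ√ε √(E(v) + ε)` at `v`. For a fixed centre, Chernoff's bound with
`e^{-t} ≤ 1 - t + t²/2` (a one-sided Bernstein inequality) bounds the probability of this by
`exp(-γ²mε/(2‖A‖²M²))`, and a union bound over the centres concludes.
-/

namespace WFrame

open Finset

def mean {X : Type*} [Fintype X] (g : X → ℝ) : ℝ := (1 / (Fintype.card X : ℝ)) * ∑ x, g x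

def sampleMean {X : Type*} {m : ℕ} (g : X → ℝ) (z : Fin m → X) : ℝ :=
  (1 / (m : ℝ)) * ∑ i, g (z i)

lemma exp_neg_le_one_sub_add_sq_div_two {t : ℝ} (ht : 0 ≤ t) :
    Real.exp (-t) ≤ 1 - t + t ^ 2 / 2 := by
  have hq := Real.quadratic_le_exp_of_nonneg ht
  have hp : 0 < 1 - t + t ^ 2 / 2 := by nlinarith [sq_nonneg (t - 1)]
  have hinv : Real.exp (-t) * Real.exp t = 1 := by
    rw [← Real.exp_add, neg_add_cancel, Real.exp_zero]
  -- `(1 - t + t²/2) (1 + t + t²/2) = 1 + t⁴/4 ≥ 1`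
  nlinarith [mul_le_mul_of_nonneg_left hq hp.le, Real.exp_pos (-t), sq_nonneg (t ^ 2)]

section Sampling

variable {X : Type*} {m : ℕ}

lemma sampleMean_eq_mean (g : X → ℝ) (z : Fin m → X) : sampleMean g z = mean (g ∘ z) := by
  simp [sampleMean, mean]

lemma natCast_mul_sampleMean (g : X → ℝ) (z : Fin m → X) :
    (m : ℝ) * sampleMean g z = ∑ i, g (z i) := by
  rcases m.eq_zero_or_pos with rfl | hm
  · simp
  · rw [sampleMean, ← mul_assoc, mul_one_div_cancel (by positivity), one_mul]

lemma sampleMean_nonneg {g : X → ℝ} (hg : ∀ x, 0 ≤ g x) (z : Fin m → X) :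
    0 ≤ sampleMean g z :=
  mul_nonneg (by positivity) (sum_nonneg fun i _ => hg (z i))

variable [Fintype X]

lemma mean_nonneg {g : X → ℝ} (hg : ∀ x, 0 ≤ g x) : 0 ≤ mean g :=
  mul_nonneg (by positivity) (sum_nonneg fun x _ => hg x)

lemma mean_le_mean {g h : X → ℝ} (hgh : ∀ x, g x ≤ h x) : mean g ≤ mean h := by
  unfold mean
  gcongr with x
  exact hgh x

lemma abs_mean_sub_mean_le {g h : X → ℝ} {δ : ℝ} (hδ : 0 ≤ δ) (hgh : ∀ x, |g x - h x| ≤ δ) :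
    |mean g - mean h| ≤ δ := by
  rcases isEmpty_or_nonempty X with hX | hX
  · simpa [mean] using hδ
  have hc : (0 : ℝ) < Fintype.card X := by exact_mod_cast Fintype.card_pos
  calc |mean g - mean h| = (1 / (Fintype.card X : ℝ)) * |∑ x, (g x - h x)| := by
        rw [mean, mean, ← mul_sub, ← sum_sub_distrib, abs_mul, abs_of_pos (by positivity)]
    _ ≤ (1 / (Fintype.card X : ℝ)) * (Fintype.card X * δ) := by
        gcongr
        refine (abs_sum_le_sum_abs _ _).trans ?_
        simpa using sum_le_card_nsmul univ _ δ fun x _ => hgh x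
    _ = δ := by field_simp

lemma prob_le_sum_div {E : Set (Fin m → X)} {h : (Fin m → X) → ℝ} (h0 : ∀ z, 0 ≤ h z)
    (h1 : ∀ z ∈ E, 1 ≤ h z) : prob E ≤ (∑ z, h z) / (Fintype.card X : ℝ) ^ m := by
  unfold prob
  gcongr with z
  split_ifs with hz
  exacts [h1 z hz, h0 z]

lemma prob_le_sum_prob_of_subset_iUnion {ι : Type*} [Fintype ι] {E : Set (Fin m → X)}
    {F : ι → Set (Fin m → X)} (hEF : E ⊆ ⋃ j, F j) : prob E ≤ ∑ j, prob (F j) := by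
  classical
  have hind : ∀ j z, 0 ≤ if z ∈ F j then (1 : ℝ) else 0 := fun j z => by
    split_ifs <;> norm_num
  calc prob E ≤ (∑ z, ∑ j, if z ∈ F j then (1 : ℝ) else 0) / (Fintype.card X : ℝ) ^ m := by
        refine prob_le_sum_div (fun z => sum_nonneg fun j _ => hind j z) fun z hz => ?_
        obtain ⟨j, hj⟩ := Set.mem_iUnion.mp (hEF hz)
        calc (1 : ℝ) = if z ∈ F j then 1 else 0 := (if_pos hj).symm
          _ ≤ _ := single_le_sum (fun i _ => hind i z) (mem_univ j)
    _ = ∑ j, prob (F j) := by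
        rw [sum_comm, sum_div]
        simp only [prob]

lemma mean_exp_neg_mul_le {g : X → ℝ} {B lam : ℝ} (hg0 : ∀ x, 0 ≤ g x) (hgB : ∀ x, g x ≤ B)
    (hlam : 0 ≤ lam) :
    mean (fun x => Real.exp (-lam * g x)) ≤
      Real.exp (-lam * mean g + lam ^ 2 * B * mean g / 2) := by
  rcases isEmpty_or_nonempty X with hX | hX
  · simp [mean]
  have hc : (0 : ℝ) < Fintype.card X := by exact_mod_cast Fintype.card_pos
  calc mean (fun x => Real.exp (-lam * g x))
      ≤ mean (fun x => 1 - lam * g x + lam ^ 2 * B * g x / 2) := mean_le_mean fun x => by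
        have hsq : g x ^ 2 ≤ B * g x := by nlinarith [hg0 x, hgB x]
        have := exp_neg_le_one_sub_add_sq_div_two (mul_nonneg hlam (hg0 x))
        rw [neg_mul]
        nlinarith [sq_nonneg lam]
    _ = 1 + (-lam * mean g + lam ^ 2 * B * mean g / 2) := by
        simp only [mean, sum_add_distrib, sum_sub_distrib, ← mul_sum, ← sum_div, sum_const,
          card_univ, nsmul_eq_mul, mul_one]
        field_simp
        ring
    _ ≤ _ := by linarith [Real.add_one_le_exp (-lam * mean g + lam ^ 2 * B * mean g / 2)]

lemma prob_mean_sub_sampleMean_gt_le_exp_mul {g : X → ℝ} {α lam : ℝ} (hlam : 0 ≤ lam) :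
    prob {z : Fin m → X | mean g - sampleMean g z > α} ≤
      Real.exp (lam * m * (mean g - α)) * mean (fun x => Real.exp (-lam * g x)) ^ m := by
  have hprod : ∀ z : Fin m → X, Real.exp (lam * m * (mean g - α)) * ∏ i, Real.exp (-lam * g (z i))
      = Real.exp (lam * (m * (mean g - α) - ∑ i, g (z i))) := fun z => by
    rw [← Real.exp_sum, ← Real.exp_add, ← mul_sum]
    ring_nf
  calc prob {z : Fin m → X | mean g - sampleMean g z > α}
      ≤ (∑ z : Fin m → X, Real.exp (lam * m * (mean g - α)) * ∏ i, Real.exp (-lam * g (z i)))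
          / (Fintype.card X : ℝ) ^ m := by
        refine prob_le_sum_div (fun z => by positivity) fun z hz => ?_
        rw [hprod, Real.one_le_exp_iff]
        have hz' : sampleMean g z ≤ mean g - α := by
          linarith [show mean g - sampleMean g z > α from hz]
        have := mul_le_mul_of_nonneg_left hz' (Nat.cast_nonneg (α := ℝ) m)
        rw [natCast_mul_sampleMean] at this
        exact mul_nonneg hlam (by linarith)
    _ = _ := by
        rw [← mul_sum, ← Fintype.sum_pow (fun x => Real.exp (-lam * g x)), mul_div_assoc, ← div_pow]
        simp only [mean, one_div_mul_eq_div]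

/-- A one-sided Bernstein inequality: the variance of a `[0, B]`-valued `g` is at most
`B * mean g`. -/
lemma prob_mean_sub_sampleMean_gt_le {g : X → ℝ} {B α : ℝ} (hg0 : ∀ x, 0 ≤ g x)
    (hgB : ∀ x, g x ≤ B) (hB : 0 < B) (hμ : 0 < mean g) (hα : 0 ≤ α) :
    prob {z : Fin m → X | mean g - sampleMean g z > α} ≤
      Real.exp (-(m * α ^ 2) / (2 * B * mean g)) := by
  set lam := α / (B * mean g) with hlam_def
  have hlam : 0 ≤ lam := by positivity
  calc _ ≤ Real.exp (lam * m * (mean g - α)) * mean (fun x => Real.exp (-lam * g x)) ^ m :=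
        prob_mean_sub_sampleMean_gt_le_exp_mul hlam
    _ ≤ Real.exp (lam * m * (mean g - α)) *
          Real.exp (-lam * mean g + lam ^ 2 * B * mean g / 2) ^ m := by
        gcongr
        · exact mean_nonneg fun x => (Real.exp_pos _).le
        · exact mean_exp_neg_mul_le hg0 hgB hlam
    _ = _ := by
        rw [← Real.exp_nat_mul, ← Real.exp_add]
        congr 1
        rw [hlam_def]
        field_simp
        ring

lemma prob_mean_sub_sampleMean_gt_mul_sqrt_le {g : X → ℝ} {B ε γ : ℝ} (hg0 : ∀ x, 0 ≤ g x)
    (hgB : ∀ x, g x ≤ B) (hB : 0 < B) (hε : 0 ≤ ε) (hγ : 0 ≤ γ) :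
    prob {z : Fin m → X | mean g - sampleMean g z > γ * √ε * √(mean g + ε)} ≤
      Real.exp (-(γ ^ 2 * m * ε) / (2 * B)) := by
  rcases (mean_nonneg hg0).eq_or_lt with hμ | hμ
  · have hempty : {z : Fin m → X | mean g - sampleMean g z > γ * √ε * √(mean g + ε)} = ∅ :=
      Set.eq_empty_of_forall_notMem fun z hz => by
        have hgt : mean g - sampleMean g z > γ * √ε * √(mean g + ε) := hz
        have : 0 ≤ γ * √ε * √(mean g + ε) := by positivity
        linarith [sampleMean_nonneg hg0 z]
    rw [hempty]
    simpa [prob] using (Real.exp_pos _).le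
  · refine (prob_mean_sub_sampleMean_gt_le hg0 hgB hB hμ (by positivity)).trans
      (Real.exp_le_exp.mpr ?_)
    rw [mul_pow, mul_pow, Real.sq_sqrt hε, Real.sq_sqrt (by positivity), neg_div, neg_div,
      neg_le_neg_iff, div_le_div_iff₀ (by positivity) (by positivity)]
    have : 0 ≤ γ ^ 2 * m * ε ^ 2 * B := by positivity
    nlinarith

lemma mul_sqrt_lt_sub_of_four_mul_sqrt_lt_sub {e ez e' ez' ε γ : ℝ} (he : 0 ≤ e) (hε : 0 ≤ ε)
    (hγ : 0 ≤ γ) (hγ1 : γ ≤ 1) (hd : |e - e'| ≤ γ * ε) (hdz : |ez - ez'| ≤ γ * ε)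
    (h : 4 * γ * √ε * √(e + ε) < e - ez) : γ * √ε * √(e' + ε) < e' - ez' := by
  obtain ⟨hd₁, hd₂⟩ := abs_le.mp hd
  obtain ⟨hdz₁, hdz₂⟩ := abs_le.mp hdz
  have hγε : γ * ε ≤ γ * √ε * √(e + ε) := by
    rw [mul_assoc]
    gcongr
    calc ε = √ε * √ε := (Real.mul_self_sqrt hε).symm
      _ ≤ √ε * √(e + ε) := by gcongr; linarith
  have hsqrt : √(e' + ε) ≤ 2 * √(e + ε) := by
    refine Real.sqrt_le_iff.mpr ⟨by positivity, ?_⟩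
    rw [mul_pow, Real.sq_sqrt (by linarith)]
    nlinarith
  have := mul_le_mul_of_nonneg_left hsqrt (by positivity : 0 ≤ γ * √ε)
  linarith

lemma setOf_iSup_gt_subset_iUnion {ι κ : Type*} {G : ι → X → ℝ} {H : κ → X → ℝ} {ε γ : ℝ}
    (hG : ∀ i x, 0 ≤ G i x) (hε : 0 < ε) (hγ : 0 ≤ γ) (hγ1 : γ ≤ 1)
    (hGH : ∀ i, ∃ j, ∀ x, |G i x - H j x| ≤ γ * ε) :
    {z : Fin m → X |
        (⨆ i, (mean (G i) - sampleMean (G i) z) / √(mean (G i) + ε)) > 4 * γ * √ε} ⊆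
      ⋃ j, {z | mean (H j) - sampleMean (H j) z > γ * √ε * √(mean (H j) + ε)} := by
  intro z hz
  obtain ⟨i, hi⟩ :
      ∃ i, 4 * γ * √ε < (mean (G i) - sampleMean (G i) z) / √(mean (G i) + ε) := by
    by_contra! h
    exact (Real.iSup_le h (by positivity)).not_gt hz
  obtain ⟨j, hj⟩ := hGH i
  have hμ := mean_nonneg (hG i)
  have hsampled : |sampleMean (G i) z - sampleMean (H j) z| ≤ γ * ε := by
    rw [sampleMean_eq_mean, sampleMean_eq_mean]
    exact abs_mean_sub_mean_le (by positivity) fun k => hj (z k)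
  refine Set.mem_iUnion.mpr ⟨j, mul_sqrt_lt_sub_of_four_mul_sqrt_lt_sub hμ hε.le hγ hγ1
    (abs_mean_sub_mean_le (by positivity) hj) hsampled ?_⟩
  exact (lt_div_iff₀ (Real.sqrt_pos.mpr (by linarith))).mp hi

end Sampling

section Residual

variable {ι κ : Type*} [Fintype ι] [Fintype κ] {M : ℝ}

lemma norm_sub_le_of_mem_Icc (hM : 0 ≤ M) {u w : ι → ℝ} (hu : ∀ k, u k ∈ Set.Icc 0 M)
    (hw : ∀ k, w k ∈ Set.Icc 0 M) : ‖u - w‖ ≤ M :=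
  (pi_norm_le_iff_of_nonneg hM).2 fun k =>
    abs_sub_le_of_nonneg_of_le (hu k).1 (hu k).2 (hw k).1 (hw k).2

lemma abs_apply_sub_apply_le (A : (ι → ℝ) →L[ℝ] (κ → ℝ)) (u w : ι → ℝ) (k : κ) :
    |A u k - A w k| ≤ ‖A‖ * ‖u - w‖ := by
  rw [← Pi.sub_apply, ← map_sub]
  exact (norm_le_pi_norm _ k).trans (A.le_opNorm _)

lemma abs_apply_sub_apply_le_of_mem_Icc (A : (ι → ℝ) →L[ℝ] (κ → ℝ)) (hM : 0 ≤ M) {u w : ι → ℝ}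
    (hu : ∀ k, u k ∈ Set.Icc 0 M) (hw : ∀ k, w k ∈ Set.Icc 0 M) (k : κ) :
    |A u k - A w k| ≤ ‖A‖ * M :=
  (abs_apply_sub_apply_le A u w k).trans
    (mul_le_mul_of_nonneg_left (norm_sub_le_of_mem_Icc hM hu hw) (norm_nonneg A))

lemma sq_apply_sub_apply_le_of_mem_Icc (A : (ι → ℝ) →L[ℝ] (κ → ℝ)) (hM : 0 ≤ M) {u w : ι → ℝ}
    (hu : ∀ k, u k ∈ Set.Icc 0 M) (hw : ∀ k, w k ∈ Set.Icc 0 M) (k : κ) :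
    (A u k - A w k) ^ 2 ≤ ‖A‖ ^ 2 * M ^ 2 := by
  obtain ⟨hlo, hhi⟩ := abs_le.mp (abs_apply_sub_apply_le_of_mem_Icc A hM hu hw k)
  rw [← mul_pow]
  exact sq_le_sq' hlo hhi

lemma abs_sq_apply_sub_sq_apply_le (A : (ι → ℝ) →L[ℝ] (κ → ℝ)) (hM : 0 ≤ M) {f u w : ι → ℝ}
    {t : ℝ} (hf : ∀ k, f k ∈ Set.Icc 0 M) (hu : ∀ k, u k ∈ Set.Icc 0 M)
    (hw : ∀ k, w k ∈ Set.Icc 0 M) (huw : ‖u - w‖ ≤ t) (k : κ) :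
    |(A u k - A f k) ^ 2 - (A w k - A f k) ^ 2| ≤ 2 * ‖A‖ ^ 2 * M * t := by
  have hdiff : |A u k - A w k| ≤ ‖A‖ * t :=
    (abs_apply_sub_apply_le A u w k).trans (mul_le_mul_of_nonneg_left huw (norm_nonneg A))
  have hsum : |(A u k - A f k) + (A w k - A f k)| ≤ ‖A‖ * M + ‖A‖ * M :=
    (abs_add_le _ _).trans (add_le_add (abs_apply_sub_apply_le_of_mem_Icc A hM hu hf k)
      (abs_apply_sub_apply_le_of_mem_Icc A hM hw hf k))
  calc |(A u k - A f k) ^ 2 - (A w k - A f k) ^ 2|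
      = |A u k - A w k| * |(A u k - A f k) + (A w k - A f k)| := by
        rw [sq_sub_sq, abs_mul, mul_comm, sub_sub_sub_cancel_right]
    _ ≤ (‖A‖ * t) * (‖A‖ * M + ‖A‖ * M) :=
        mul_le_mul hdiff hsum (abs_nonneg _) ((abs_nonneg _).trans hdiff)
    _ = 2 * ‖A‖ ^ 2 * M * t := by ring

end Residual

lemma exists_cover_coverNum {X : Type*} [Fintype X] {M t : ℝ} (ht : 0 < t) {S : Set (X → ℝ)}
    (hS : ∀ u ∈ S, ∀ x, u x ∈ Set.Icc 0 M) :
    ∃ v : Fin (coverNum M t S) → X → ℝ,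
      (∀ j x, v j x ∈ Set.Icc 0 M) ∧ ∀ u ∈ S, ∃ j, ‖u - v j‖ ≤ t := by
  suffices hne : {K : ℕ | ∃ v : Fin K → X → ℝ, (∀ j x, v j x ∈ Set.Icc 0 M) ∧
      ∀ u ∈ S, ∃ j, ∀ x, |u x - v j x| ≤ t}.Nonempty by
    obtain ⟨v, hv, hcov⟩ := Nat.sInf_mem hne
    refine ⟨v, hv, fun u hu => ?_⟩
    obtain ⟨j, hj⟩ := hcov u hu
    exact ⟨j, (pi_norm_le_iff_of_nonneg ht.le).2 hj⟩
  obtain ⟨T, hT, hTfin, hcov⟩ :=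
    finite_cover_balls_of_compact (isCompact_Icc : IsCompact (Set.Icc (0 : X → ℝ) fun _ => M)) ht
  let e := hTfin.toFinset.equivFin
  refine ⟨hTfin.toFinset.card, fun j => (e.symm j : X → ℝ), fun j x => ?_, fun u hu => ?_⟩
  · have hj := hT (hTfin.mem_toFinset.mp (e.symm j).2)
    exact ⟨hj.1 x, hj.2 x⟩
  · obtain ⟨w, hw, hdist⟩ :=
      Set.mem_iUnion₂.mp (hcov ⟨fun x => (hS u hu x).1, fun x => (hS u hu x).2⟩)
    refine ⟨e ⟨w, hTfin.mem_toFinset.mpr hw⟩, fun x => ?_⟩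
    simp only [Equiv.symm_apply_apply, ← Real.dist_eq]
    exact (dist_le_pi_dist u w x).trans (Metric.mem_ball.mp hdist).le

theorem stmt6_general (N : ℕ) [NeZero N] (M : ℝ) (hM : 0 < M)
    (A : (ZMod N × ZMod N → ℝ) →L[ℝ] (ZMod N × ZMod N → ℝ)) (hA : 0 < ‖A‖)
    (S : Set (ZMod N × ZMod N → ℝ))
    (hSM : ∀ u ∈ S, ∀ k, u k ∈ Set.Icc (0 : ℝ) M)
    (f : ZMod N × ZMod N → ℝ) (hfM : ∀ k, f k ∈ Set.Icc (0 : ℝ) M)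
    (m : ℕ)
    (ε γ : ℝ) (hε : 0 < ε) (hγ : 0 < γ) (hγ1 : γ ≤ 1) :
    prob {z : Fin m → ZMod N × ZMod N |
        (⨆ u : S, (((1 / ((N : ℝ) ^ 2)) * ∑ k, (A u (k) - A f k) ^ 2) -
            (1 / (m : ℝ)) * ∑ i, (A u (z i) - A f (z i)) ^ 2) /
          Real.sqrt ((1 / ((N : ℝ) ^ 2)) * (∑ k, (A u (k) - A f k) ^ 2) + ε)) >
          4 * γ * Real.sqrt ε} ≤
      (coverNum M (γ * ε / (2 * ‖A‖ ^ 2 * M)) S : ℝ) *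
        Real.exp (-(3 * γ ^ 2 * m * ε) / (8 * ‖A‖ ^ 2 * M ^ 2)) := by
  obtain ⟨v, hv, hcov⟩ := exists_cover_coverNum (t := γ * ε / (2 * ‖A‖ ^ 2 * M)) (by positivity) hSM
  let G : (ZMod N × ZMod N → ℝ) → ZMod N × ZMod N → ℝ := fun u k => (A u k - A f k) ^ 2
  have hclose : ∀ u : S, ∃ j, ∀ k, |G u k - G (v j) k| ≤ γ * ε := fun u => by
    obtain ⟨j, hj⟩ := hcov u u.2
    refine ⟨j, fun k => ?_⟩
    refine (abs_sq_apply_sub_sq_apply_le A hM.le hfM (hSM u u.2) (hv j) hj k).trans_eq ?_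
    field_simp
  have hcard : (N : ℝ) ^ 2 = Fintype.card (ZMod N × ZMod N) := by simp [sq]
  rw [hcard]
  calc prob _ ≤ ∑ j, prob {z | mean (G (v j)) - sampleMean (G (v j)) z >
          γ * √ε * √(mean (G (v j)) + ε)} :=
        prob_le_sum_prob_of_subset_iUnion
          (setOf_iSup_gt_subset_iUnion (G := fun u : S => G u) (fun _ _ => sq_nonneg _) hε hγ.le
            hγ1 hclose)
    _ ≤ ∑ j : Fin (coverNum M (γ * ε / (2 * ‖A‖ ^ 2 * M)) S),
          Real.exp (-(γ ^ 2 * m * ε) / (2 * (‖A‖ ^ 2 * M ^ 2))) := by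
        gcongr with j
        exact prob_mean_sub_sampleMean_gt_mul_sqrt_le (fun _ => sq_nonneg _)
          (sq_apply_sub_apply_le_of_mem_Icc A hM.le (hv j) hfM) (by positivity) hε.le hγ.le
    _ ≤ _ := by
        rw [sum_const, card_univ, Fintype.card_fin, nsmul_eq_mul]
        refine mul_le_mul_of_nonneg_left (Real.exp_le_exp.mpr ?_) (Nat.cast_nonneg _)
        rw [div_le_div_iff₀ (by positivity) (by positivity)]
        have : 0 ≤ γ ^ 2 * m * ε * (‖A‖ ^ 2 * M ^ 2) := by positivity
        nlinarith

/-- Proposition 3.3 — uniform ratio deviation bound: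
P{ z : sup_{u∈S} (E(u) − E_z(u))/√(E(u)+ε) > 4γ√ε }
  ≤ N(S, γε/(2‖A‖²M))·exp(−3γ²mε/(8‖A‖²M²)). -/
theorem stmt6 (N : ℕ) (hN : 2 ≤ N) [NeZero N] (M : ℝ) (hM : 0 < M)
    (A : (ZMod N × ZMod N → ℝ) →L[ℝ] (ZMod N × ZMod N → ℝ)) (hA : 0 < ‖A‖)
    (S : Set (ZMod N × ZMod N → ℝ)) (hS : S.Nonempty)
    (hSM : ∀ u ∈ S, ∀ k, u k ∈ Set.Icc (0 : ℝ) M)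
    (f : ZMod N × ZMod N → ℝ) (hfM : ∀ k, f k ∈ Set.Icc (0 : ℝ) M)
    (m : ℕ) (hm : 1 ≤ m)
    (ε γ : ℝ) (hε : 0 < ε) (hγ : 0 < γ) (hγ1 : γ ≤ 1) :
    prob {z : Fin m → ZMod N × ZMod N |
        (⨆ u : S, (((1 / ((N : ℝ) ^ 2)) * ∑ k, (A u (k) - A f k) ^ 2) -
            (1 / (m : ℝ)) * ∑ i, (A u (z i) - A f (z i)) ^ 2) /
          Real.sqrt ((1 / ((N : ℝ) ^ 2)) * (∑ k, (A u (k) - A f k) ^ 2) + ε)) >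
          4 * γ * Real.sqrt ε} ≤
      (coverNum M (γ * ε / (2 * ‖A‖ ^ 2 * M)) S : ℝ) *
        Real.exp (-(3 * γ ^ 2 * m * ε) / (8 * ‖A‖ ^ 2 * M ^ 2)) :=
  stmt6_general N M hM A hA S hSM f hfM m ε γ hε hγ hγ1

end WFrame
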